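/- For every ℓ > 0 and every x ∈ ℝ⁴ with σ²(x) ≠ 4ℓ², the conformal parametrization F_ℓ is differentiable at x and its derivative L = DF_ℓ(x) : ℝ⁴ → ℝ⁵ satisfies B̊(L u, L v) = −Ω(x)² · η(u, v) for all u, v ∈ ℝ⁴; i.e. the pullback metric g = −ι*g̊ induced on the de Sitter manifold in these coordinates equals Ω² η_{μν} dx^μ ⊗ dx^ν. -/

import Mathlib

noncomputable section

/-- The Minkowski bilinear form on ℝ⁴: η(u,v) = u⁰v⁰ − u¹v¹ − u²v² − u³v³. -/
def minkowskiForm (u v : Fin 4 → ℝ) : ℝ :=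
  u 0 * v 0 - u 1 * v 1 - u 2 * v 2 - u 3 * v 3

/-- The pseudo-Euclidean bilinear form of signature (4,1) on ℝ⁵, with coordinates
(X⁰, X¹, X², X³, X⁴): B̊(U,V) = U¹V¹ + U²V² + U³V³ + U⁴V⁴ − U⁰V⁰. -/
def deSitterForm (U V : Fin 5 → ℝ) : ℝ :=
  U 1 * V 1 + U 2 * V 2 + U 3 * V 3 + U 4 * V 4 - U 0 * V 0

/-- The conformal factor Ω(x) = (1 − σ²(x)/(4ℓ²))⁻¹, where σ²(x) = η(x,x). -/
def Omega (ℓ : ℝ) (x : Fin 4 → ℝ) : ℝ :=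
  (1 - minkowskiForm x x / (4 * ℓ ^ 2))⁻¹

/-- The conformal parametrization of the de Sitter pseudo-sphere:
X^μ = Ω(x)·x^μ for μ = 0,1,2,3 and X⁴ = −ℓ·Ω(x)·(1 + σ²(x)/(4ℓ²)). -/
def Fconf (ℓ : ℝ) (x : Fin 4 → ℝ) : Fin 5 → ℝ :=
  ![Omega ℓ x * x 0, Omega ℓ x * x 1, Omega ℓ x * x 2, Omega ℓ x * x 3,
    -ℓ * Omega ℓ x * (1 + minkowskiForm x x / (4 * ℓ ^ 2))]


theorem algKey (E c a b S ℓ x0 x1 x2 x3 u0 u1 u2 u3 v0 v1 v2 v3 : ℝ)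
    (hE : E * (1 - S * c) = 1) (hc : c * (4 * ℓ ^ 2) = 1)
    (hadef : a = (x0 * u0 - x1 * u1 - x2 * u2 - x3 * u3)) (hbdef : b = (x0 * v0 - x1 * v1 - x2 * v2 - x3 * v3))
    (hSdef : S = x0 * x0 - x1 * x1 - x2 * x2 - x3 * x3) :
    (E * u1 + x1 * (E * E * (2 * a * c))) * (E * v1 + x1 * (E * E * (2 * b * c))) + (E * u2 + x2 * (E * E * (2 * a * c))) * (E * v2 + x2 * (E * E * (2 * b * c))) + (E * u3 + x3 * (E * E * (2 * a * c))) * (E * v3 + x3 * (E * E * (2 * b * c))) + (-ℓ * (E * E * (2 * a * c) * (1 + S * c) + E * (2 * a * c))) * (-ℓ * (E * E * (2 * b * c) * (1 + S * c) + E * (2 * b * c))) - (E * u0 + x0 * (E * E * (2 * a * c))) * (E * v0 + x0 * (E * E * (2 * b * c))) = -E ^ 2 * (u0 * v0 - u1 * v1 - u2 * v2 - u3 * v3) := by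
  linear_combination (a * b * c * E ^ 2 * (E * (1 - S * c) - 1)) * hE +
    (a * b * c * (E ^ 4 * (1 + S * c) ^ 2 + 2 * E ^ 3 * (1 + S * c) + E ^ 2)) * hc +
    (2 * b * c * E ^ 3) * hadef + (2 * a * c * E ^ 3) * hbdef +
    (4 * a * b * c ^ 2 * E ^ 4) * hSdef


set_option maxHeartbeats 4000000 in
set_option maxRecDepth 100000 in
/-- For every ℓ > 0 and x with σ²(x) ≠ 4ℓ², the conformal parametrization F_ℓ is
differentiable at x and its derivative L = DF_ℓ(x) satisfies
B̊(Lu, Lv) = −Ω(x)²·η(u,v) for all u, v ∈ ℝ⁴; i.e. the pullback metric is Ω²η. -/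
theorem conformal_param_pullback_metric (ℓ : ℝ) (hℓ : 0 < ℓ) (x : Fin 4 → ℝ)
    (hx : minkowskiForm x x ≠ 4 * ℓ ^ 2) :
    DifferentiableAt ℝ (Fconf ℓ) x ∧
      ∀ u v : Fin 4 → ℝ,
        deSitterForm (fderiv ℝ (Fconf ℓ) x u) (fderiv ℝ (Fconf ℓ) x v) =
          -(Omega ℓ x) ^ 2 * minkowskiForm u v := by
  have hl2 : (4 * ℓ ^ 2) ≠ 0 := by positivity
  have hD0 : (1 - (x 0 * x 0 - x 1 * x 1 - x 2 * x 2 - x 3 * x 3) * (4 * ℓ ^ 2)⁻¹) ≠ 0 := by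
    intro h
    apply hx
    have : (x 0 * x 0 - x 1 * x 1 - x 2 * x 2 - x 3 * x 3) * (4 * ℓ ^ 2)⁻¹ = 1 := by linarith
    field_simp at this
    simp only [minkowskiForm]; linear_combination this
  have hproj : ∀ i : Fin 4, HasFDerivAt (fun y : Fin 4 → ℝ => y i)
      (ContinuousLinearMap.proj (R := ℝ) (φ := fun _ : Fin 4 => ℝ) i) x :=
    fun i => hasFDerivAt_apply i x
  have hm := ((((hproj 0).mul (hproj 0)).sub ((hproj 1).mul (hproj 1))).sub
      ((hproj 2).mul (hproj 2))).sub ((hproj 3).mul (hproj 3))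
  have hD := (hasFDerivAt_const (1 : ℝ) x).sub (hm.mul_const ((4 * ℓ ^ 2)⁻¹))
  have hΩ := (hasFDerivAt_inv' hD0).comp x hD
  simp only [Function.comp_def] at hΩ
  have h0 := hΩ.mul (hproj 0)
  have h1 := hΩ.mul (hproj 1)
  have h2 := hΩ.mul (hproj 2)
  have h3 := hΩ.mul (hproj 3)
  have h4 := (hΩ.const_mul (-ℓ)).mul
      ((hasFDerivAt_const (1 : ℝ) x).add (hm.mul_const ((4 * ℓ ^ 2)⁻¹)))
  set gi : Fin 5 → (Fin 4 → ℝ) → ℝ :=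
    ![fun y => (1 - (y 0 * y 0 - y 1 * y 1 - y 2 * y 2 - y 3 * y 3) * (4 * ℓ ^ 2)⁻¹)⁻¹ * y 0,
      fun y => (1 - (y 0 * y 0 - y 1 * y 1 - y 2 * y 2 - y 3 * y 3) * (4 * ℓ ^ 2)⁻¹)⁻¹ * y 1,
      fun y => (1 - (y 0 * y 0 - y 1 * y 1 - y 2 * y 2 - y 3 * y 3) * (4 * ℓ ^ 2)⁻¹)⁻¹ * y 2,
      fun y => (1 - (y 0 * y 0 - y 1 * y 1 - y 2 * y 2 - y 3 * y 3) * (4 * ℓ ^ 2)⁻¹)⁻¹ * y 3,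
      fun y => -ℓ * (1 - (y 0 * y 0 - y 1 * y 1 - y 2 * y 2 - y 3 * y 3) * (4 * ℓ ^ 2)⁻¹)⁻¹ *
        (1 + (y 0 * y 0 - y 1 * y 1 - y 2 * y 2 - y 3 * y 3) * (4 * ℓ ^ 2)⁻¹)] with hgi
  have hFg : Fconf ℓ = fun y i => gi i y := by
    funext y i
    fin_cases i <;>
      simp [Fconf, Omega, minkowskiForm, hgi, div_eq_mul_inv]
  have hdiff : ∀ i, DifferentiableAt ℝ (gi i) x := by
    intro i
    fin_cases i
    · exact h0.differentiableAt
    · exact h1.differentiableAt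
    · exact h2.differentiableAt
    · exact h3.differentiableAt
    · exact h4.differentiableAt
  constructor
  · rw [hFg]
    exact differentiableAt_pi.2 fun i => hdiff i
  · intro u v
    rw [hFg, fderiv_pi hdiff]
    have hl : ℓ ≠ 0 := hℓ.ne'
    have e0 : ∀ w : Fin 4 → ℝ, fderiv ℝ
        (fun y : Fin 4 → ℝ =>
          (1 - (y 0 * y 0 - y 1 * y 1 - y 2 * y 2 - y 3 * y 3) * (4 * ℓ ^ 2)⁻¹)⁻¹ * y 0) x w =
        (1 - (x 0 * x 0 - x 1 * x 1 - x 2 * x 2 - x 3 * x 3) * (4 * ℓ ^ 2)⁻¹)⁻¹ * w 0 +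
        x 0 * ((1 - (x 0 * x 0 - x 1 * x 1 - x 2 * x 2 - x 3 * x 3) * (4 * ℓ ^ 2)⁻¹)⁻¹ *
          (1 - (x 0 * x 0 - x 1 * x 1 - x 2 * x 2 - x 3 * x 3) * (4 * ℓ ^ 2)⁻¹)⁻¹ *
          (2 * (x 0 * w 0 - x 1 * w 1 - x 2 * w 2 - x 3 * w 3) * (4 * ℓ ^ 2)⁻¹)) := by
      intro w
      erw [h0.fderiv]
      simp only [ContinuousLinearMap.add_apply, ContinuousLinearMap.sub_apply,
        ContinuousLinearMap.smul_apply, ContinuousLinearMap.comp_apply,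
        ContinuousLinearMap.neg_apply, ContinuousLinearMap.zero_apply,
        ContinuousLinearMap.mulLeftRight_apply, ContinuousLinearMap.proj_apply, smul_eq_mul,
        Pi.sub_apply, Pi.mul_apply]
      ring
    have e1 : ∀ w : Fin 4 → ℝ, fderiv ℝ
        (fun y : Fin 4 → ℝ =>
          (1 - (y 0 * y 0 - y 1 * y 1 - y 2 * y 2 - y 3 * y 3) * (4 * ℓ ^ 2)⁻¹)⁻¹ * y 1) x w =
        (1 - (x 0 * x 0 - x 1 * x 1 - x 2 * x 2 - x 3 * x 3) * (4 * ℓ ^ 2)⁻¹)⁻¹ * w 1 +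
        x 1 * ((1 - (x 0 * x 0 - x 1 * x 1 - x 2 * x 2 - x 3 * x 3) * (4 * ℓ ^ 2)⁻¹)⁻¹ *
          (1 - (x 0 * x 0 - x 1 * x 1 - x 2 * x 2 - x 3 * x 3) * (4 * ℓ ^ 2)⁻¹)⁻¹ *
          (2 * (x 0 * w 0 - x 1 * w 1 - x 2 * w 2 - x 3 * w 3) * (4 * ℓ ^ 2)⁻¹)) := by
      intro w
      erw [h1.fderiv]
      simp only [ContinuousLinearMap.add_apply, ContinuousLinearMap.sub_apply,
        ContinuousLinearMap.smul_apply, ContinuousLinearMap.comp_apply,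
        ContinuousLinearMap.neg_apply, ContinuousLinearMap.zero_apply,
        ContinuousLinearMap.mulLeftRight_apply, ContinuousLinearMap.proj_apply, smul_eq_mul,
        Pi.sub_apply, Pi.mul_apply]
      ring
    have e2 : ∀ w : Fin 4 → ℝ, fderiv ℝ
        (fun y : Fin 4 → ℝ =>
          (1 - (y 0 * y 0 - y 1 * y 1 - y 2 * y 2 - y 3 * y 3) * (4 * ℓ ^ 2)⁻¹)⁻¹ * y 2) x w =
        (1 - (x 0 * x 0 - x 1 * x 1 - x 2 * x 2 - x 3 * x 3) * (4 * ℓ ^ 2)⁻¹)⁻¹ * w 2 +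
        x 2 * ((1 - (x 0 * x 0 - x 1 * x 1 - x 2 * x 2 - x 3 * x 3) * (4 * ℓ ^ 2)⁻¹)⁻¹ *
          (1 - (x 0 * x 0 - x 1 * x 1 - x 2 * x 2 - x 3 * x 3) * (4 * ℓ ^ 2)⁻¹)⁻¹ *
          (2 * (x 0 * w 0 - x 1 * w 1 - x 2 * w 2 - x 3 * w 3) * (4 * ℓ ^ 2)⁻¹)) := by
      intro w
      erw [h2.fderiv]
      simp only [ContinuousLinearMap.add_apply, ContinuousLinearMap.sub_apply,
        ContinuousLinearMap.smul_apply, ContinuousLinearMap.comp_apply,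
        ContinuousLinearMap.neg_apply, ContinuousLinearMap.zero_apply,
        ContinuousLinearMap.mulLeftRight_apply, ContinuousLinearMap.proj_apply, smul_eq_mul,
        Pi.sub_apply, Pi.mul_apply]
      ring
    have e3 : ∀ w : Fin 4 → ℝ, fderiv ℝ
        (fun y : Fin 4 → ℝ =>
          (1 - (y 0 * y 0 - y 1 * y 1 - y 2 * y 2 - y 3 * y 3) * (4 * ℓ ^ 2)⁻¹)⁻¹ * y 3) x w =
        (1 - (x 0 * x 0 - x 1 * x 1 - x 2 * x 2 - x 3 * x 3) * (4 * ℓ ^ 2)⁻¹)⁻¹ * w 3 +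
        x 3 * ((1 - (x 0 * x 0 - x 1 * x 1 - x 2 * x 2 - x 3 * x 3) * (4 * ℓ ^ 2)⁻¹)⁻¹ *
          (1 - (x 0 * x 0 - x 1 * x 1 - x 2 * x 2 - x 3 * x 3) * (4 * ℓ ^ 2)⁻¹)⁻¹ *
          (2 * (x 0 * w 0 - x 1 * w 1 - x 2 * w 2 - x 3 * w 3) * (4 * ℓ ^ 2)⁻¹)) := by
      intro w
      erw [h3.fderiv]
      simp only [ContinuousLinearMap.add_apply, ContinuousLinearMap.sub_apply,
        ContinuousLinearMap.smul_apply, ContinuousLinearMap.comp_apply,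
        ContinuousLinearMap.neg_apply, ContinuousLinearMap.zero_apply,
        ContinuousLinearMap.mulLeftRight_apply, ContinuousLinearMap.proj_apply, smul_eq_mul,
        Pi.sub_apply, Pi.mul_apply]
      ring
    have e4 : ∀ w : Fin 4 → ℝ, fderiv ℝ
        (fun y : Fin 4 → ℝ =>
          -ℓ * (1 - (y 0 * y 0 - y 1 * y 1 - y 2 * y 2 - y 3 * y 3) * (4 * ℓ ^ 2)⁻¹)⁻¹ *
            (1 + (y 0 * y 0 - y 1 * y 1 - y 2 * y 2 - y 3 * y 3) * (4 * ℓ ^ 2)⁻¹)) x w =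
        -ℓ * ((1 - (x 0 * x 0 - x 1 * x 1 - x 2 * x 2 - x 3 * x 3) * (4 * ℓ ^ 2)⁻¹)⁻¹ *
            (1 - (x 0 * x 0 - x 1 * x 1 - x 2 * x 2 - x 3 * x 3) * (4 * ℓ ^ 2)⁻¹)⁻¹ *
            (2 * (x 0 * w 0 - x 1 * w 1 - x 2 * w 2 - x 3 * w 3) * (4 * ℓ ^ 2)⁻¹) *
            (1 + (x 0 * x 0 - x 1 * x 1 - x 2 * x 2 - x 3 * x 3) * (4 * ℓ ^ 2)⁻¹) +
          (1 - (x 0 * x 0 - x 1 * x 1 - x 2 * x 2 - x 3 * x 3) * (4 * ℓ ^ 2)⁻¹)⁻¹ *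
            (2 * (x 0 * w 0 - x 1 * w 1 - x 2 * w 2 - x 3 * w 3) * (4 * ℓ ^ 2)⁻¹)) := by
      intro w
      erw [h4.fderiv]
      simp only [ContinuousLinearMap.add_apply, ContinuousLinearMap.sub_apply,
        ContinuousLinearMap.smul_apply, ContinuousLinearMap.comp_apply,
        ContinuousLinearMap.neg_apply, ContinuousLinearMap.zero_apply,
        ContinuousLinearMap.mulLeftRight_apply, ContinuousLinearMap.proj_apply, smul_eq_mul,
        Pi.sub_apply, Pi.mul_apply, Pi.add_apply]
      ring
    simp only [deSitterForm, ContinuousLinearMap.pi_apply, hgi, Matrix.cons_val_zero,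
      Matrix.cons_val_one, Matrix.head_cons, Matrix.cons_val_two, Matrix.tail_cons,
      Matrix.cons_val_three, Matrix.cons_val_four, Matrix.cons_val_fin_one]
    rw [e0 u, e0 v, e1 u, e1 v, e2 u, e2 v, e3 u, e3 v, e4 u, e4 v]
    have hE : (1 - (x 0 * x 0 - x 1 * x 1 - x 2 * x 2 - x 3 * x 3) * (4 * ℓ ^ 2)⁻¹)⁻¹ *
        (1 - (x 0 * x 0 - x 1 * x 1 - x 2 * x 2 - x 3 * x 3) * (4 * ℓ ^ 2)⁻¹) = 1 :=
      inv_mul_cancel₀ hD0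
    have hc : (4 * ℓ ^ 2)⁻¹ * (4 * ℓ ^ 2) = 1 := inv_mul_cancel₀ hl2
    have hOm : Omega ℓ x =
        (1 - (x 0 * x 0 - x 1 * x 1 - x 2 * x 2 - x 3 * x 3) * (4 * ℓ ^ 2)⁻¹)⁻¹ := by
      rw [Omega, minkowskiForm, div_eq_mul_inv]
    have hmk : minkowskiForm u v = u 0 * v 0 - u 1 * v 1 - u 2 * v 2 - u 3 * v 3 := rfl
    rw [hOm, hmk]
    exact algKey (1 - (x 0 * x 0 - x 1 * x 1 - x 2 * x 2 - x 3 * x 3) * (4 * ℓ ^ 2)⁻¹)⁻¹ (4 * ℓ ^ 2)⁻¹ (x 0 * u 0 - x 1 * u 1 - x 2 * u 2 - x 3 * u 3) (x 0 * v 0 - x 1 * v 1 - x 2 * v 2 - x 3 * v 3) (x 0 * x 0 - x 1 * x 1 - x 2 * x 2 - x 3 * x 3) ℓ (x 0) (x 1) (x 2) (x 3)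
      (u 0) (u 1) (u 2) (u 3) (v 0) (v 1) (v 2) (v 3)
      (inv_mul_cancel₀ hD0) (inv_mul_cancel₀ hl2) rfl rfl rfl
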